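/- For every graph H on m ≥ 3 vertices and all sufficiently large k, g(H,k) ≥ k/m^3. Concretely: for n = ⌊k/m^3⌋ with k large enough that C(n,2) ≥ k, writing C(n,2) = qk + r with 0 ≤ r ≤ k-1 and setting e_1 = ... = e_{k-r} = q and e_{k-r+1} = ... = e_k = q+1, every colouring of K_n with exactly e_i edges of colour i contains a rainbow copy of K_m (hence of H). -/

import Mathlib

/-- A colouring `c` of the edges of the complete graph on `Fin n` contains a rainbow copy
of `H` via the embedding `f` if the edges of `H` get pairwise distinct colours. -/
def IsRainbowCopy {α β : Type*} {n : ℕ} (H : SimpleGraph α) (c : Sym2 (Fin n) → β)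
    (f : α ↪ Fin n) : Prop :=
  ∀ a b a' b', H.Adj a b → H.Adj a' b' →
    c s(f a, f b) = c s(f a', f b') → s(a, b) = s(a', b')

/-- The colouring `c` contains a rainbow copy of `H`. -/
def HasRainbow {α β : Type*} {n : ℕ} (H : SimpleGraph α) (c : Sym2 (Fin n) → β) : Prop :=
  ∃ f : α ↪ Fin n, IsRainbowCopy H c f

/-- The colouring `c` of `K_n` uses exactly `e i` edges of colour `i`. -/
def ColouringDistribution {n k : ℕ} (c : Sym2 (Fin n) → Fin k) (e : Fin k → ℕ) : Prop :=
  ∀ i : Fin k,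
    (Finset.univ.filter fun s : Sym2 (Fin n) => ¬ s.IsDiag ∧ c s = i).card = e i

/-- `gVal H k` is the least `N : ℕ∞` such that for every `n ≥ N` and every sequence
`(e_1, …, e_k)` of nonnegative integers summing to `C(n,2)` there is a rainbow `H`-free
colouring of `K_n` with exactly `e i` edges of colour `i`; it equals `⊤` when no finite
such `N` exists. -/
noncomputable def gVal {α : Type*} (H : SimpleGraph α) (k : ℕ) : ℕ∞ :=
  sInf {N : ℕ∞ | ∀ n : ℕ, N ≤ (n : ℕ∞) → ∀ e : Fin k → ℕ, (∑ i, e i) = n.choose 2 →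
    ∃ c : Sym2 (Fin n) → Fin k, ColouringDistribution c e ∧ ¬ HasRainbow H c}
open Finset

variable {n : ℕ}

/-- endpoints of an edge as a finset -/
def everts {n : ℕ} (s : Sym2 (Fin n)) : Finset (Fin n) := Finset.univ.filter (· ∈ s)

lemma everts_pair (a b : Fin n) : everts s(a, b) = {a, b} := by
  ext x; simp [everts, Sym2.mem_iff]

lemma subset_everts_union_left (s t : Sym2 (Fin n)) : everts s ⊆ everts s ∪ everts t :=
  subset_union_left

lemma card_everts {s : Sym2 (Fin n)} (h : ¬ s.IsDiag) : (everts s).card = 2 := by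
  induction s using Sym2.inductionOn with
  | hf a b =>
    rw [Sym2.mk_isDiag_iff] at h
    rw [everts_pair, card_pair h]

lemma everts_inj {s t : Sym2 (Fin n)} (h : everts s = everts t) : s = t := by
  induction s using Sym2.inductionOn with
  | hf a b =>
    induction t using Sym2.inductionOn with
    | hf c d =>
      rw [everts_pair, everts_pair] at h
      have ha : a = c ∨ a = d := by
        have : a ∈ ({c, d} : Finset (Fin n)) := h ▸ (by simp)
        simpa using this
      have hb : b = c ∨ b = d := by
        have : b ∈ ({c, d} : Finset (Fin n)) := h ▸ (by simp)
        simpa using this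
      have hc : c = a ∨ c = b := by
        have : c ∈ ({a, b} : Finset (Fin n)) := h ▸ (by simp)
        simpa using this
      have hd : d = a ∨ d = b := by
        have : d ∈ ({a, b} : Finset (Fin n)) := h ▸ (by simp)
        simpa using this
      rw [Sym2.eq_iff]
      rcases ha with rfl | rfl <;> rcases hb with rfl | rfl <;> tauto

lemma three_le_card_union {s t : Sym2 (Fin n)} (hs : ¬s.IsDiag) (ht : ¬t.IsDiag)
    (hst : s ≠ t) : 3 ≤ (everts s ∪ everts t).card := by
  by_contra h
  push_neg at h
  have h2s : (everts s).card = 2 := card_everts hs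
  have h2t : (everts t).card = 2 := card_everts ht
  have hs' : everts s = everts s ∪ everts t :=
    eq_of_subset_of_card_le subset_union_left (by omega)
  have ht' : everts t = everts s ∪ everts t :=
    eq_of_subset_of_card_le subset_union_right (by omega)
  exact hst (everts_inj (hs'.trans ht'.symm))

lemma card_filter_subset_powersetCard (V : Finset (Fin n)) {m : ℕ} (hVm : V.card ≤ m) :
    (((univ : Finset (Fin n)).powersetCard m).filter (fun T => V ⊆ T)).card
      = (n - V.card).choose (m - V.card) := by
  classical
  rw [show (n - V.card).choose (m - V.card)
      = ((univ \ V : Finset (Fin n)).powersetCard (m - V.card)).card by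
    rw [card_powersetCard, card_sdiff_of_subset (subset_univ V), card_univ, Fintype.card_fin]]
  apply Finset.card_bij' (fun T _ => T \ V) (fun U _ => U ∪ V)
  · intro T hT
    simp only [mem_filter, mem_powersetCard] at hT
    simp only [mem_powersetCard]
    exact ⟨sdiff_subset_sdiff hT.1.1 le_rfl,
      by rw [card_sdiff_of_subset hT.2, hT.1.2]⟩
  · intro U hU
    simp only [mem_powersetCard] at hU
    have hdisj : Disjoint U V := disjoint_of_subset_left hU.1 sdiff_disjoint
    simp only [mem_filter, mem_powersetCard]
    refine ⟨⟨subset_univ _, ?_⟩, subset_union_right⟩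
    rw [card_union_of_disjoint hdisj, hU.2]
    omega
  · intro T hT
    simp only [mem_filter, mem_powersetCard] at hT
    rw [sdiff_union_of_subset hT.2]
  · intro U hU
    simp only [mem_powersetCard] at hU
    have hdisj : Disjoint U V := disjoint_of_subset_left hU.1 sdiff_disjoint
    rw [union_sdiff_right, sdiff_eq_self_of_disjoint hdisj]

lemma exists_rainbow_set {n k m q : ℕ} (hm : 3 ≤ m)
    (c : Sym2 (Fin n) → Fin k) (e : Fin k → ℕ)
    (hd : ColouringDistribution c e) (he : ∀ i, e i ≤ q + 1)
    (hineq : k * ((q + 1) * (q + 1)) * ((n - 3).choose (m - 3)) < n.choose m) :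
    ∃ T ∈ (univ : Finset (Fin n)).powersetCard m,
      ∀ s t : Sym2 (Fin n), everts s ⊆ T → everts t ⊆ T →
        ¬s.IsDiag → ¬t.IsDiag → c s = c t → s = t := by
  classical
  set P : Finset (Sym2 (Fin n) × Sym2 (Fin n)) :=
    univ.filter (fun p => ¬p.1.IsDiag ∧ ¬p.2.IsDiag ∧ p.1 ≠ p.2 ∧ c p.1 = c p.2) with hP
  have hPcard : P.card ≤ k * ((q + 1) * (q + 1)) := by
    have hsub : P ⊆ (univ : Finset (Fin k)).biUnion
        (fun i => (univ.filter fun s : Sym2 (Fin n) => ¬ s.IsDiag ∧ c s = i) ×ˢ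
                  (univ.filter fun s : Sym2 (Fin n) => ¬ s.IsDiag ∧ c s = i)) := by
      intro p hp
      simp only [hP, mem_filter, mem_univ, true_and] at hp
      simp only [mem_biUnion, mem_univ, mem_product, mem_filter, true_and]
      exact ⟨c p.1, ⟨hp.1, rfl⟩, hp.2.1, hp.2.2.2.symm⟩
    calc P.card ≤ _ := card_le_card hsub
      _ ≤ ∑ i : Fin k, ((univ.filter fun s : Sym2 (Fin n) => ¬ s.IsDiag ∧ c s = i) ×ˢ
                  (univ.filter fun s : Sym2 (Fin n) => ¬ s.IsDiag ∧ c s = i)).card :=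
        card_biUnion_le
      _ ≤ ∑ _i : Fin k, (q + 1) * (q + 1) := by
        apply Finset.sum_le_sum
        intro i _
        rw [card_product, hd i]
        exact Nat.mul_le_mul (he i) (he i)
      _ = k * ((q + 1) * (q + 1)) := by simp [mul_comm]
  set bad : Finset (Finset (Fin n)) :=
    ((univ : Finset (Fin n)).powersetCard m).filter
      (fun T => ¬ ∀ s t : Sym2 (Fin n), everts s ⊆ T → everts t ⊆ T →
        ¬s.IsDiag → ¬t.IsDiag → c s = c t → s = t) with hbad
  have hbadsub : bad ⊆ P.biUnion (fun p =>
      ((univ : Finset (Fin n)).powersetCard m).filter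
        (fun T => everts p.1 ∪ everts p.2 ⊆ T)) := by
    intro T hT
    simp only [hbad, mem_filter] at hT
    obtain ⟨hTm, hTbad⟩ := hT
    push_neg at hTbad
    obtain ⟨s, t, hsT, htT, hs, ht, hc, hst⟩ := hTbad
    simp only [mem_biUnion]
    refine ⟨(s, t), ?_, ?_⟩
    · simp only [hP, mem_filter, mem_univ, true_and]
      exact ⟨hs, ht, hst, hc⟩
    · simp only [mem_filter]
      exact ⟨hTm, union_subset hsT htT⟩
  have hbound : ∀ p ∈ P,
      (((univ : Finset (Fin n)).powersetCard m).filter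
        (fun T => everts p.1 ∪ everts p.2 ⊆ T)).card ≤ (n - 3).choose (m - 3) := by
    intro p hp
    simp only [hP, mem_filter, mem_univ, true_and] at hp
    have h3 : 3 ≤ (everts p.1 ∪ everts p.2).card :=
      three_le_card_union hp.1 hp.2.1 hp.2.2.1
    obtain ⟨V, hVsub, hVcard⟩ := Finset.exists_subset_card_eq h3
    calc _ ≤ (((univ : Finset (Fin n)).powersetCard m).filter (fun T => V ⊆ T)).card := by
            apply card_le_card
            apply monotone_filter_right
            intro T _ hT
            exact hVsub.trans hT
      _ = (n - V.card).choose (m - V.card) := card_filter_subset_powersetCard V (hVcard ▸ hm)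
      _ = (n - 3).choose (m - 3) := by rw [hVcard]
  have hbadcard : bad.card < n.choose m := by
    calc bad.card ≤ _ := card_le_card hbadsub
      _ ≤ ∑ p ∈ P, (((univ : Finset (Fin n)).powersetCard m).filter
        (fun T => everts p.1 ∪ everts p.2 ⊆ T)).card := card_biUnion_le
      _ ≤ ∑ _p ∈ P, (n - 3).choose (m - 3) := Finset.sum_le_sum hbound
      _ = P.card * (n - 3).choose (m - 3) := by rw [Finset.sum_const, smul_eq_mul]
      _ ≤ k * ((q + 1) * (q + 1)) * ((n - 3).choose (m - 3)) :=
        Nat.mul_le_mul_right _ hPcard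
      _ < n.choose m := hineq
  have htotal : ((univ : Finset (Fin n)).powersetCard m).card = n.choose m := by
    rw [card_powersetCard, card_univ, Fintype.card_fin]
  have : ∃ T ∈ (univ : Finset (Fin n)).powersetCard m, T ∉ bad := by
    by_contra hcon
    push_neg at hcon
    have : (univ : Finset (Fin n)).powersetCard m ⊆ bad := hcon
    have := card_le_card this
    omega
  obtain ⟨T, hT, hTbad⟩ := this
  refine ⟨T, hT, ?_⟩
  by_contra hcon
  exact hTbad (by simp only [hbad, mem_filter]; exact ⟨hT, hcon⟩)

lemma choose_id {n m : ℕ} (h3 : 3 ≤ m) (hmn : m ≤ n) :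
    m * (m - 1) * (m - 2) * n.choose m = n * (n - 1) * (n - 2) * (n - 3).choose (m - 3) := by
  obtain ⟨M, rfl⟩ : ∃ M, m = M + 3 := ⟨m - 3, by omega⟩
  obtain ⟨N, rfl⟩ : ∃ N, n = N + 3 := ⟨n - 3, by omega⟩
  have h1 := Nat.add_one_mul_choose_eq N M
  have h2 := Nat.add_one_mul_choose_eq (N + 1) (M + 1)
  have h3 := Nat.add_one_mul_choose_eq (N + 2) (M + 2)
  simp only [Nat.add_sub_cancel, show N + 3 - 1 = N + 2 by omega, show N + 3 - 2 = N + 1 by omega,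
    show M + 3 - 1 = M + 2 by omega, show M + 3 - 2 = M + 1 by omega]
  calc (M + 3) * (M + 2) * (M + 1) * (N + 3).choose (M + 3)
      = (M + 2) * (M + 1) * ((N + 3).choose (M + 3) * (M + 3)) := by ring
    _ = (M + 2) * (M + 1) * ((N + 2 + 1) * (N + 2).choose (M + 2)) := by rw [← h3]
    _ = (N + 3) * ((M + 1) * ((N + 2).choose (M + 2) * (M + 2))) := by ring
    _ = (N + 3) * ((M + 1) * ((N + 1 + 1) * (N + 1).choose (M + 1))) := by rw [← h2]
    _ = (N + 3) * (N + 2) * ((N + 1).choose (M + 1) * (M + 1)) := by ring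
    _ = (N + 3) * (N + 2) * ((N + 1) * N.choose M) := by rw [← h1]
    _ = (N + 3) * (N + 2) * (N + 1) * N.choose M := by ring

lemma two_mul_choose_two (n : ℕ) : 2 * n.choose 2 = n * (n - 1) := by
  induction n with
  | zero => simp
  | succ N ih =>
    rw [Nat.choose_succ_succ, Nat.choose_one_right, Nat.mul_add, ih]
    cases N <;> simp <;> ring

lemma numeric1 {m n k : ℕ} (hm : 3 ≤ m) (h14 : 14 * m ^ 3 ≤ n) (hk : k < (n + 1) * m ^ 3) :
    k * 2 ≤ n * (n - 1) := by
  have hm3 : 27 ≤ m ^ 3 := by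
    calc (27 : ℕ) = 3 ^ 3 := by norm_num
      _ ≤ m ^ 3 := Nat.pow_le_pow_left hm 3
  obtain ⟨N, rfl⟩ : ∃ N, n = N + 1 := ⟨n - 1, by omega⟩
  simp only [Nat.add_sub_cancel]
  nlinarith [Nat.mul_le_mul_left (N + 2) h14]

lemma numeric2 {m n k q : ℕ} (hm : 3 ≤ m) (h14 : 14 * m ^ 3 ≤ n)
    (hq : 2 * q * m ^ 3 + 1 ≤ n) (hk : k < (n + 1) * m ^ 3) :
    k * ((q + 1) * (q + 1)) * (m * (m - 1) * (m - 2)) < n * (n - 1) * (n - 2) := by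
  have hm3 : 27 ≤ m ^ 3 := by
    calc (27 : ℕ) = 3 ^ 3 := by norm_num
      _ ≤ m ^ 3 := Nat.pow_le_pow_left hm 3
  have hmmm : m * (m - 1) * (m - 2) ≤ m ^ 3 := by
    have h1 : m - 1 ≤ m := by omega
    have h2 : m - 2 ≤ m := by omega
    calc m * (m - 1) * (m - 2) ≤ m * m * m :=
          Nat.mul_le_mul (Nat.mul_le_mul_left m h1) h2
      _ = m ^ 3 := by ring
  obtain ⟨N, rfl⟩ : ∃ N, n = N + 2 := ⟨n - 2, by omega⟩
  simp only [Nat.add_sub_cancel, show N + 2 - 2 = N by omega, show N + 2 - 1 = N + 1 by omega]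
  have hN : 376 ≤ N := by omega
  have hx : 14 * ((q + 1) * m ^ 3) ≤ 8 * N + 16 := by nlinarith
  have h1 : k * ((q + 1) * (q + 1)) * (m * (m - 1) * (m - 2))
      ≤ (N + 3) * ((q + 1) * m ^ 3) * ((q + 1) * m ^ 3) := by
    calc k * ((q + 1) * (q + 1)) * (m * (m - 1) * (m - 2))
        ≤ k * ((q + 1) * (q + 1)) * m ^ 3 := Nat.mul_le_mul_left _ hmmm
      _ ≤ (N + 3) * m ^ 3 * ((q + 1) * (q + 1)) * m ^ 3 := by
          have hk' : k ≤ (N + 3) * m ^ 3 := by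
            rw [show N + 3 = N + 2 + 1 by ring]; omega
          exact Nat.mul_le_mul_right _ (Nat.mul_le_mul_right _ hk')
      _ = (N + 3) * ((q + 1) * m ^ 3) * ((q + 1) * m ^ 3) := by ring
  have h196 : (14 * ((q + 1) * m ^ 3)) * (14 * ((q + 1) * m ^ 3))
      ≤ (8 * N + 16) * (8 * N + 16) := Nat.mul_le_mul hx hx
  have h196' := Nat.mul_le_mul_left (N + 3) h196
  nlinarith [h1, h196', hN, Nat.mul_le_mul_right (N * N) hN, Nat.mul_le_mul_right N hN]

/-- For every graph `H` on `m ≥ 3` vertices and all sufficiently large `k`, setting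
`n = ⌊k/m³⌋` we have `C(n,2) ≥ k`, and with `q = C(n,2)/k`, `r = C(n,2) mod k`, the
sequence with `k - r` entries `q` followed by `r` entries `q+1`, every colouring of `K_n`
realising it contains a rainbow `K_m` (hence a rainbow `H`); consequently
`g(H,k) ≥ k/m³`. -/
theorem stmt3 {α : Type*} [Fintype α] (H : SimpleGraph α) (m : ℕ) (hm : 3 ≤ m)
    (hcard : Fintype.card α = m) :
    ∃ K : ℕ, ∀ k : ℕ, K ≤ k →
      k ≤ (k / m ^ 3).choose 2 ∧
      (∀ c : Sym2 (Fin (k / m ^ 3)) → Fin k,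
        ColouringDistribution c (fun i => if (i : ℕ) < k - (k / m ^ 3).choose 2 % k
          then (k / m ^ 3).choose 2 / k else (k / m ^ 3).choose 2 / k + 1) →
        HasRainbow (⊤ : SimpleGraph (Fin m)) c ∧ HasRainbow H c) ∧
      ((k / m ^ 3 : ℕ) : ℕ∞) ≤ gVal H k := by
  classical
  have hm3 : 27 ≤ m ^ 3 := by
    calc (27 : ℕ) = 3 ^ 3 := by norm_num
      _ ≤ m ^ 3 := Nat.pow_le_pow_left hm 3
  refine ⟨14 * m ^ 6, fun k hk => ?_⟩
  set n := k / m ^ 3 with hn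
  have hmpos : 0 < m ^ 3 := by positivity
  have hnm : n * m ^ 3 ≤ k := Nat.div_mul_le_self k (m ^ 3)
  have hkn : k < (n + 1) * m ^ 3 := by
    have h1 := Nat.mod_lt k hmpos
    have h2 := Nat.div_add_mod k (m ^ 3)
    calc k = m ^ 3 * n + k % m ^ 3 := h2.symm
      _ < m ^ 3 * n + m ^ 3 := by omega
      _ = (n + 1) * m ^ 3 := by ring
  have h14 : 14 * m ^ 3 ≤ n := by
    rw [hn, Nat.le_div_iff_mul_le hmpos]
    calc 14 * m ^ 3 * m ^ 3 = 14 * m ^ 6 := by ring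
      _ ≤ k := hk
  have hmle : m ≤ m ^ 3 := Nat.le_self_pow (by norm_num) m
  have hmn : m ≤ n := by omega
  have hnpos : 0 < n := by omega
  have hchoose2 : 2 * n.choose 2 = n * (n - 1) := two_mul_choose_two n
  have hpart1 : k ≤ n.choose 2 := by
    have h1 : k * 2 ≤ n * (n - 1) := numeric1 hm h14 hkn
    omega
  set q := n.choose 2 / k with hqdef
  set r := n.choose 2 % k with hrdef
  have hm6pos : 0 < 14 * m ^ 6 := by positivity
  have hkpos : 0 < k := by omega
  have hrk : r < k := Nat.mod_lt _ hkpos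
  have hqk : q * k ≤ n.choose 2 := Nat.div_mul_le_self _ _
  have hqbound : 2 * q * m ^ 3 + 1 ≤ n := by
    have h1 : 2 * q * (n * m ^ 3) ≤ n * (n - 1) := by
      calc 2 * q * (n * m ^ 3) ≤ 2 * q * k := Nat.mul_le_mul_left _ hnm
        _ = 2 * (q * k) := by ring
        _ ≤ 2 * n.choose 2 := Nat.mul_le_mul_left 2 hqk
        _ = n * (n - 1) := hchoose2
    have h2 : n * (2 * q * m ^ 3) ≤ n * (n - 1) := by
      calc n * (2 * q * m ^ 3) = 2 * q * (n * m ^ 3) := by ring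
        _ ≤ n * (n - 1) := h1
    have h3 : 2 * q * m ^ 3 ≤ n - 1 := Nat.le_of_mul_le_mul_left h2 hnpos
    omega
  have hmain : ∀ c : Sym2 (Fin n) → Fin k,
      ColouringDistribution c (fun i => if (i : ℕ) < k - r then q else q + 1) →
      HasRainbow (⊤ : SimpleGraph (Fin m)) c ∧ HasRainbow H c := by
    intro c hdist
    have he : ∀ i : Fin k, (if (i : ℕ) < k - r then q else q + 1) ≤ q + 1 := by
      intro i; split <;> omega
    have hineq : k * ((q + 1) * (q + 1)) * ((n - 3).choose (m - 3)) < n.choose m := by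
      have hid := choose_id hm hmn
      have h2 := numeric2 hm h14 hqbound hkn
      have hCpos : 0 < (n - 3).choose (m - 3) := Nat.choose_pos (by omega)
      have hmmm : 0 < m * (m - 1) * (m - 2) := by
        apply Nat.mul_pos (Nat.mul_pos (by omega) (by omega)) (by omega)
      have key : k * ((q + 1) * (q + 1)) * ((n - 3).choose (m - 3)) * (m * (m - 1) * (m - 2))
          < n.choose m * (m * (m - 1) * (m - 2)) := by
        calc k * ((q + 1) * (q + 1)) * ((n - 3).choose (m - 3)) * (m * (m - 1) * (m - 2))
            = (k * ((q + 1) * (q + 1)) * (m * (m - 1) * (m - 2))) * ((n - 3).choose (m - 3)) := by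
              ring
          _ < (n * (n - 1) * (n - 2)) * ((n - 3).choose (m - 3)) := by
              exact Nat.mul_lt_mul_of_lt_of_le h2 le_rfl hCpos
          _ = n.choose m * (m * (m - 1) * (m - 2)) := by rw [← hid]; ring
      exact Nat.lt_of_mul_lt_mul_right key
    obtain ⟨T, hT, hrain⟩ := exists_rainbow_set hm c _ hdist he hineq
    rw [Finset.mem_powersetCard] at hT
    have hTcard : T.card = m := hT.2
    let f0 := T.orderIsoOfFin hTcard
    let f : Fin m ↪ Fin n := ⟨fun i => (f0 i : Fin n), fun i j hij =>
      f0.injective (Subtype.ext hij)⟩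
    have hmemT : ∀ i : Fin m, f i ∈ T := fun i => (f0 i).2
    have hfinj : Function.Injective f := f.injective
    have htop : IsRainbowCopy (⊤ : SimpleGraph (Fin m)) c f := by
      intro a b a' b' hab hab' hcc
      have hne : a ≠ b := hab.ne
      have hne' : a' ≠ b' := hab'.ne
      have h1 : everts s(f a, f b) ⊆ T := by
        rw [everts_pair]
        intro x hx
        simp only [mem_insert, mem_singleton] at hx
        rcases hx with rfl | rfl <;> exact hmemT _
      have h2 : everts s(f a', f b') ⊆ T := by
        rw [everts_pair]
        intro x hx
        simp only [mem_insert, mem_singleton] at hx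
        rcases hx with rfl | rfl <;> exact hmemT _
      have hd1 : ¬ (s(f a, f b)).IsDiag := by
        rw [Sym2.mk_isDiag_iff]
        exact fun h => hne (hfinj h)
      have hd2 : ¬ (s(f a', f b')).IsDiag := by
        rw [Sym2.mk_isDiag_iff]
        exact fun h => hne' (hfinj h)
      have heq := hrain _ _ h1 h2 hd1 hd2 hcc
      apply Sym2.map.injective hfinj
      simpa [Sym2.map_pair_eq] using heq
    refine ⟨⟨f, htop⟩, ?_⟩
    let g : α ↪ Fin m := (Fintype.equivFinOfCardEq hcard).toEmbedding
    refine ⟨g.trans f, ?_⟩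
    intro a b a' b' hab hab' hcc
    have hgadj : (⊤ : SimpleGraph (Fin m)).Adj (g a) (g b) := by
      simp only [SimpleGraph.top_adj]
      exact fun h => hab.ne (g.injective h)
    have hgadj' : (⊤ : SimpleGraph (Fin m)).Adj (g a') (g b') := by
      simp only [SimpleGraph.top_adj]
      exact fun h => hab'.ne (g.injective h)
    have h1 := htop (g a) (g b) (g a') (g b') hgadj hgadj' hcc
    apply Sym2.map.injective g.injective
    simpa [Sym2.map_pair_eq] using h1
  refine ⟨hpart1, hmain, ?_⟩
  apply le_sInf
  intro N hN
  by_contra hcon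
  push_neg at hcon
  have hNle : N ≤ (n : ℕ∞) := le_of_lt hcon
  have hsum : (∑ i : Fin k, (if (i : ℕ) < k - r then q else q + 1)) = n.choose 2 := by
    have hdm : k * q + r = n.choose 2 := Nat.div_add_mod (n.choose 2) k
    rw [Fin.sum_univ_eq_sum_range (fun i => if i < k - r then q else q + 1) k]
    rw [Finset.range_eq_Ico,
      ← Finset.sum_Ico_consecutive _ (Nat.zero_le (k - r)) (show k - r ≤ k by omega)]
    have hS1 : (∑ i ∈ Finset.Ico 0 (k - r), (if i < k - r then q else q + 1)) = (k - r) * q := by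
      rw [Finset.sum_congr rfl (fun i hi => if_pos (Finset.mem_Ico.mp hi).2)]
      rw [Finset.sum_const, Nat.card_Ico, smul_eq_mul, Nat.sub_zero]
    have hS2 : (∑ i ∈ Finset.Ico (k - r) k, (if i < k - r then q else q + 1)) = r * (q + 1) := by
      rw [Finset.sum_congr rfl (fun i hi => if_neg (by
        have := (Finset.mem_Ico.mp hi).1; omega))]
      rw [Finset.sum_const, Nat.card_Ico, smul_eq_mul]
      congr 1
      omega
    rw [hS1, hS2]
    have hexp : (k - r) * q + r * (q + 1) = (k - r + r) * q + r := by ring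
    rw [hexp, Nat.sub_add_cancel (le_of_lt hrk)]
    omega
  obtain ⟨c, hdist, hnr⟩ := hN n hNle _ hsum
  exact hnr ((hmain c hdist).2)
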